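/- Let g be a Boolean function on k bits computed by a (loose) permutation branching program of length T and width W, and let f₁,…,f_k be Boolean functions with GH(f_i) ≤ c for all i. Then GH(g(f₁,…,f_k)) = O(T · W · c). -/

import Mathlib

/-- One step of the water's path in a garden-hose game: on even steps Alice's
matching (an involution on pipes together with the tap `none`) is applied,
on odd steps Bob's matching (an involution on the pipes). A fixed point of the
relevant involution means the corresponding pipe end is open (unmatched). -/
def ghStep {s : ℕ} (A : Option (Fin s) → Option (Fin s)) (B : Fin s → Fin s)
    (n : ℕ) (v : Option (Fin s)) : Option (Fin s) :=
  if n % 2 = 0 then A v else Option.map B v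

/-- Position of the water after `n` steps, starting at the tap `none`. -/
def ghWalk {s : ℕ} (A : Option (Fin s) → Option (Fin s)) (B : Fin s → Fin s) :
    ℕ → Option (Fin s)
  | 0 => none
  | n + 1 => ghStep A B n (ghWalk A B n)

/-- The length of the path starting at the tap: the first time the walk halts
(i.e. the current pipe end is open). Its parity is the output of the game. -/
noncomputable def ghLen {s : ℕ} (A : Option (Fin s) → Option (Fin s))
    (B : Fin s → Fin s) : ℕ :=
  sInf {n | ghStep A B n (ghWalk A B n) = ghWalk A B n}

/-- A garden-hose protocol with `s` pipes: Alice places, depending on her input,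
a matching (involution) on the pipes together with the tap `none`; Bob places a
matching on the pipes. -/
structure GHProtocol (X Y : Type) (s : ℕ) where
  A : X → Option (Fin s) → Option (Fin s)
  B : Y → Fin s → Fin s
  hA : ∀ x, Function.Involutive (A x)
  hB : ∀ y, Function.Involutive (B y)

/-- The protocol computes `f` if for every input the walk from the tap halts and
the parity of the path length is `f x y`. -/
def GHProtocol.Computes {X Y : Type} {s : ℕ} (P : GHProtocol X Y s)
    (f : X → Y → Bool) : Prop :=
  ∀ x y,
    {n | ghStep (P.A x) (P.B y) n (ghWalk (P.A x) (P.B y) n)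
        = ghWalk (P.A x) (P.B y) n}.Nonempty ∧
    (ghLen (P.A x) (P.B y) % 2 = 1 ↔ f x y = true)

/-- The garden-hose complexity of `f`. -/
noncomputable def GH {X Y : Type} (f : X → Y → Bool) : ℕ :=
  sInf {s | ∃ P : GHProtocol X Y s, P.Computes f}

/-- A (loose) permutation branching program on `k` Boolean variables with `T`
layers of `W` nodes each: every layer queries one variable, and for each fixed
value of that variable the outgoing edges form an injective map into the next
layer's nodes together with the two sinks (`accept`/`reject`, represented by
`Bool`). -/
structure PBP (k T W : ℕ) where
  var : Fin T → Fin k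
  next : Fin T → Bool → Fin W → Fin W ⊕ Bool
  inj : ∀ t b, Function.Injective (next t b)
  start : Fin W

/-- Running a permutation branching program on an input. -/
def PBP.run {k T W : ℕ} (M : PBP k T W) (x : Fin k → Bool) : Fin W ⊕ Bool :=
  Fin.foldl T
    (fun st t =>
      match st with
      | Sum.inl w => M.next t (x (M.var t)) w
      | Sum.inr b => Sum.inr b)
    (Sum.inl M.start)

/-- The program computes `g` if on every input it reaches the correct sink. -/
def PBP.Computes {k T W : ℕ} (M : PBP k T W) (g : (Fin k → Bool) → Bool) : Prop :=
  ∀ x, M.run x = Sum.inr (g x)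

/-!
A garden-hose play is the walk from the tap alternating between Alice's and Bob's matchings;
both are involutions, so a play can be retraced. The composed protocol has, in each layer `t`, a
forward copy of the protocol for `f_{var t}` at every node, a backward copy at every target
`z ∈ W ⊕ {accept, reject}` of an edge, and a pad. Water entering the forward copy of `(t, u)` at
its tap runs the inner play, which ends on Alice's move iff `f_{var t} = 0`. That player holds
the edges of the program for this value and, instead of leaving the last pipe open, leads the
water to the same pipe of the backward copy of the target; there the play is retraced to the
tap, where Bob passes it on to the tap of the forward copy in the next layer. An edge into the
sink of the current player's parity ends the game at once; the other sink is reached back at its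
tap on Bob's move, and Bob halts there for accept and sends reject on to the pad, which Alice
leaves in place. Bob's matching is free at the taps because a play of involutions returning to
the tap at an odd time would be a palindrome and would have halted midway.
-/

open Function

theorem Function.Involutive.option_map {α : Type*} {g : α → α} (hg : Involutive g) :
    Involutive (Option.map g) := by
  rintro (_ | p)
  · rfl
  · simp [hg p]

theorem Option.exists_involutive_map_eq {α : Type*} {F : Option α → Option α} (hF : Involutive F)
    (h : F none = none) : ∃ g : α → α, Involutive g ∧ Option.map g = F := by
  have hsome : ∀ p, ∃ p', F (some p) = some p' := fun p =>
    Option.ne_none_iff_exists'.mp fun hp => by simpa [hp, h] using hF (some p)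
  choose g hg using hsome
  have hmap : Option.map g = F := by
    funext o
    cases o with
    | none => exact h.symm
    | some p => exact (hg p).symm
  refine ⟨g, fun p => Option.some_injective _ ?_, hmap⟩
  have := hF (some p)
  rwa [← hmap, Option.map_map] at this

theorem Fin.foldl_induction {α : Sort*} {n : ℕ} (f : α → Fin n → α) (x : α) (P : ℕ → α → Prop)
    (h₀ : P 0 x) (hs : ∀ (i : Fin n) (v : α), P i v → P (i + 1) (f v i)) :
    P n (Fin.foldl n f x) := by
  induction n with
  | zero => simpa using h₀
  | succ n ih =>
    rw [Fin.foldl_succ_last]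
    exact hs (Fin.last n) _ (ih (fun v i => f v i.castSucc) (fun i v h => hs i.castSucc v h))

namespace GardenHose

section Walk

variable {β : Type*}

def walkStep (A B : β → β) (n : ℕ) (v : β) : β :=
  if n % 2 = 0 then A v else B v

def walk (A B : β → β) (x₀ : β) : ℕ → β
  | 0 => x₀
  | n + 1 => walkStep A B n (walk A B x₀ n)

def Moves (s : ℕ → β) (τ n : ℕ) : Prop :=
  ∀ j < n, s (τ + j + 1) ≠ s (τ + j)

def HaltsAt (s : ℕ → β) (N : ℕ) : Prop :=
  Moves s 0 N ∧ s (N + 1) = s N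

def HaltsWith (s : ℕ → β) (r : Bool) : Prop :=
  ∃ N, HaltsAt s N ∧ (N % 2 = 1 ↔ r = true)

variable {A B : β → β} {x₀ : β} {s : ℕ → β}

theorem walk_succ (n : ℕ) : walk A B x₀ (n + 1) = walkStep A B n (walk A B x₀ n) := rfl

theorem walkStep_congr {m n : ℕ} (h : m % 2 = n % 2) : walkStep A B m = walkStep A B n := by
  funext v
  simp only [walkStep, h]

theorem walkStep_involutive (hA : Involutive A) (hB : Involutive B) (n : ℕ) :
    Involutive (walkStep A B n) := by
  intro v
  by_cases h : n % 2 = 0 <;> simp [walkStep, h, hA v, hB v]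

theorem walkStep_walk_succ (hA : Involutive A) (hB : Involutive B) (n : ℕ) :
    walkStep A B n (walk A B x₀ (n + 1)) = walk A B x₀ n :=
  walkStep_involutive hA hB n _

theorem walk_add_eq {τ L : ℕ} {t : ℕ → β} (h₀ : walk A B x₀ τ = t 0)
    (ht : ∀ j < L, walkStep A B (τ + j) (t j) = t (j + 1)) :
    ∀ j ≤ L, walk A B x₀ (τ + j) = t j := by
  intro j hj
  induction j with
  | zero => exact h₀
  | succ j ih => rw [← add_assoc, walk_succ, ih (by omega), ht j (by omega)]

theorem walk_conj {γ : Type*} (e : β ≃ γ) (x : β) (n : ℕ) :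
    walk (e.conj A) (e.conj B) (e x) n = e (walk A B x n) := by
  induction n with
  | zero => rfl
  | succ n ih =>
    rw [walk_succ, walk_succ, ih]
    by_cases h : n % 2 = 0 <;> simp [walkStep, h]

theorem walk_palindrome (hA : Involutive A) (hB : Involutive B) {n : ℕ} (hn : n % 2 = 1)
    (h : walk A B x₀ n = x₀) : ∀ j ≤ n, walk A B x₀ (n - j) = walk A B x₀ j := by
  intro j hj
  induction j with
  | zero => exact h
  | succ j ih =>
    have hpar : (n - (j + 1)) % 2 = j % 2 := by omega
    rw [← walkStep_walk_succ hA hB (n - (j + 1)), show n - (j + 1) + 1 = n - j by omega,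
      ih (by omega), walkStep_congr hpar, walk_succ]

theorem HaltsAt.walk_ne_start (hA : Involutive A) (hB : Involutive B) {N : ℕ}
    (hN : HaltsAt (walk A B x₀) N) (hodd : N % 2 = 1) : walk A B x₀ N ≠ x₀ := fun h => by
  have := walk_palindrome hA hB hodd h (N / 2) (by omega)
  rw [show N - N / 2 = 0 + N / 2 + 1 by omega] at this
  exact hN.1 (N / 2) (by omega) (by simpa using this)

theorem Moves.append {τ n n' : ℕ} (h : Moves s τ n) (h' : Moves s (τ + n) n') :
    Moves s τ (n + n') := by
  intro j hj
  by_cases hjn : j < n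
  · exact h j hjn
  · have := h' (j - n) (by omega)
    rwa [show τ + n + (j - n) = τ + j by omega] at this

theorem moves_one {τ : ℕ} (h : s (τ + 1) ≠ s τ) : Moves s τ 1 := by
  intro j hj
  obtain rfl : j = 0 := by omega
  exact h

theorem moves_of_eq {τ n : ℕ} {t : ℕ → β} (hs : ∀ j ≤ n, s (τ + j) = t j)
    (ht : ∀ j < n, t (j + 1) ≠ t j) : Moves s τ n := by
  intro j hj
  rw [add_assoc, hs _ hj, hs _ hj.le]
  exact ht j hj

theorem HaltsAt.unique {N N' : ℕ} (h : HaltsAt s N) (h' : HaltsAt s N') : N = N' := by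
  by_contra hne
  rcases Nat.lt_or_gt_of_ne hne with hlt | hlt
  · exact h'.1 N hlt (by simpa using h.2)
  · exact h.1 N' hlt (by simpa using h'.2)

theorem haltsAt_sInf (h : ∃ n, s (n + 1) = s n) : HaltsAt s (sInf {n | s (n + 1) = s n}) :=
  ⟨fun j hj => by simpa using Nat.notMem_of_lt_sInf hj, Nat.sInf_mem h⟩

theorem haltsWith_iff_sInf {r : Bool} :
    HaltsWith s r ↔ (∃ n, s (n + 1) = s n) ∧ (sInf {n | s (n + 1) = s n} % 2 = 1 ↔ r = true) := by
  constructor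
  · rintro ⟨N, hN, hr⟩
    refine ⟨⟨N, hN.2⟩, ?_⟩
    rwa [(haltsAt_sInf ⟨N, hN.2⟩).unique hN]
  · rintro ⟨hex, hr⟩
    exact ⟨_, haltsAt_sInf hex, hr⟩

theorem haltsWith_comp_iff {γ : Type*} {φ : β → γ} (hφ : Injective φ) {r : Bool} :
    HaltsWith (φ ∘ s) r ↔ HaltsWith s r := by
  simp only [HaltsWith, HaltsAt, Moves, comp_apply, hφ.ne_iff, hφ.eq_iff]

end Walk

end GardenHose

open GardenHose

theorem ghWalk_eq_walk {s : ℕ} (A : Option (Fin s) → Option (Fin s)) (B : Fin s → Fin s) :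
    ghWalk A B = walk A (Option.map B) none := by
  funext n
  induction n with
  | zero => rfl
  | succ n ih => rw [walk_succ, ← ih]; rfl

theorem GHProtocol.computes_iff {X Y : Type} {s : ℕ} (P : GHProtocol X Y s) (f : X → Y → Bool) :
    P.Computes f ↔ ∀ x y, HaltsWith (walk (P.A x) (Option.map (P.B y)) none) (f x y) := by
  simp only [← ghWalk_eq_walk, haltsWith_iff_sInf]
  rfl

theorem GHProtocol.exists_of_haltsWith {X Y β : Type} [Fintype β] [DecidableEq β] (x₀ : β)
    (A : X → β → β) (B : Y → β → β) (hA : ∀ x, Involutive (A x)) (hB : ∀ y, Involutive (B y))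
    (hB₀ : ∀ y, B y x₀ = x₀) (f : X → Y → Bool)
    (h : ∀ x y, HaltsWith (walk (A x) (B y) x₀) (f x y)) :
    ∃ P : GHProtocol X Y (Fintype.card β - 1), P.Computes f := by
  have hcard : Fintype.card {b // b ≠ x₀} = Fintype.card β - 1 := by
    have := Fintype.card_congr (Equiv.optionSubtypeNe x₀)
    rw [Fintype.card_option] at this
    omega
  let e : β ≃ Option (Fin (Fintype.card β - 1)) :=
    ((Fintype.equivFinOfCardEq hcard).optionCongr.symm.trans (Equiv.optionSubtypeNe x₀)).symm
  have he₀ : e x₀ = none := by simp [e]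
  have hconj : ∀ {F : β → β}, Involutive F → Involutive (e.conj F) := fun hF v => by
    simp [hF _]
  have hB' : ∀ y, ∃ g, Involutive g ∧ Option.map g = e.conj (B y) := fun y =>
    Option.exists_involutive_map_eq (hconj (hB y)) (by simp [← he₀, hB₀])
  choose B' hB'inv hB'map using hB'
  refine ⟨⟨fun x => e.conj (A x), B', fun x => hconj (hA x), hB'inv⟩, ?_⟩
  rw [GHProtocol.computes_iff]
  intro x y
  have hwalk : walk (e.conj (A x)) (Option.map (B' y)) none = e ∘ walk (A x) (B y) x₀ := by
    funext n
    rw [hB'map, ← he₀, walk_conj, comp_apply]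
  rw [hwalk, haltsWith_comp_iff e.injective]
  exact h x y

theorem GHProtocol.exists_const (X Y : Type) (r : Bool) :
    ∃ P : GHProtocol X Y 1, P.Computes fun _ _ => r := by
  refine GHProtocol.exists_of_haltsWith false (fun _ => (r ^^ ·)) (fun _ => id)
    (fun _ v => by cases r <;> cases v <;> rfl) (fun _ _ => rfl) (fun _ => rfl) _ fun _ _ => ?_
  cases r
  · exact ⟨0, ⟨fun j hj => absurd hj (Nat.not_lt_zero j), rfl⟩, by simp⟩
  · exact ⟨1, ⟨moves_one (by decide), rfl⟩, by simp⟩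

theorem GHProtocol.computes_eq_false_of_zero {X Y : Type} (P : GHProtocol X Y 0)
    {f : X → Y → Bool} (hP : P.Computes f) (x : X) (y : Y) : f x y = false := by
  obtain ⟨N, hN, hr⟩ := (P.computes_iff f).mp hP x y
  have h₀ : HaltsAt (walk (P.A x) (Option.map (P.B y)) none) 0 :=
    ⟨fun j hj => absurd hj (Nat.not_lt_zero j), Subsingleton.elim _ _⟩
  rw [hN.unique h₀] at hr
  simpa using hr

theorem PBP.pos_of_computes {k T W : ℕ} {M : PBP k T W} {g : (Fin k → Bool) → Bool}
    (hg : M.Computes g) : 0 < T := by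
  by_contra hT
  obtain rfl : T = 0 := by omega
  simpa [PBP.run] using hg fun _ => false

namespace GardenHose

section Glue

variable {X α : Type*} [DecidableEq α]

def glue (a : X → α → α) (w : α → X → X) (p : X × α) : X × α :=
  if a p.1 p.2 = p.2 then (w p.2 p.1, p.2) else (p.1, a p.1 p.2)

variable {a : X → α → α} {w : α → X → X}

theorem glue_involutive (ha : ∀ x, Involutive (a x)) (hw : ∀ q, Involutive (w q))
    (hfix : ∀ x q, a x q = q → a (w q x) q = q) : Involutive (glue a w) := by
  rintro ⟨x, q⟩
  by_cases h : a x q = q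
  · simp [glue, h, hfix x q h, hw q x]
  · simp [glue, h, ha x q, Ne.symm h]

theorem glue_of_ne {x : X} {q : α} (h : a x q ≠ q) : glue a w (x, q) = (x, a x q) := if_neg h

theorem glue_of_eq {x : X} {q : α} (h : a x q = q) : glue a w (x, q) = (w q x, q) := if_pos h

theorem walkStep_glue {aA aB : X → α → α} {wA wB : α → X → X} (m : ℕ) :
    walkStep (glue aA wA) (glue aB wB) m =
      glue (fun x => walkStep (aA x) (aB x) m) (fun q => walkStep (wA q) (wB q) m) := by
  funext p
  by_cases h : m % 2 = 0 <;> simp [walkStep, glue, h]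

end Glue

inductive Node (W : ℕ) where
  | fwd (u : Fin W)
  | bwd (z : Fin W ⊕ Bool)
  | pad
  deriving DecidableEq

def Node.equivSum (W : ℕ) : Node W ≃ Fin W ⊕ (Fin W ⊕ Bool) ⊕ Unit where
  toFun
    | .fwd u => .inl u
    | .bwd z => .inr (.inl z)
    | .pad => .inr (.inr ())
  invFun
    | .inl u => .fwd u
    | .inr (.inl z) => .bwd z
    | .inr (.inr ()) => .pad
  left_inv n := by cases n <;> rfl
  right_inv n := by rcases n with u | z | ⟨⟩ <;> rfl

noncomputable instance (W : ℕ) : Fintype (Node W) := Fintype.ofEquiv _ (Node.equivSum W).symm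

theorem Node.card (W : ℕ) : Fintype.card (Node W) = 2 * W + 3 := by
  rw [Fintype.card_congr (Node.equivSum W)]
  simp
  ring

variable {W : ℕ}

noncomputable def exitWire (e : Fin W → Fin W ⊕ Bool) (β : Bool) : Node W → Node W
  | .fwd u => if e u = .inr β then .fwd u else .bwd (e u)
  | .bwd z => if z = .inr β then .bwd z else (partialInv e z).elim (.bwd z) .fwd
  | .pad => .pad

theorem exitWire_involutive {e : Fin W → Fin W ⊕ Bool} (he : Injective e) (β : Bool) :
    Involutive (exitWire e β) := by
  intro n
  cases n with
  | fwd u => by_cases h : e u = .inr β <;> simp [exitWire, h, partialInv_left he]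
  | bwd z =>
    by_cases h : z = .inr β
    · simp [exitWire, h]
    · rcases hz : partialInv e z with _ | u
      · simp [exitWire, h, hz]
      · obtain rfl := (he.isPartialInv u z).mp hz
        simp [exitWire, h, hz]
  | pad => rfl

variable {T : ℕ}

def layerWire : Fin T × Node W → Fin T × Node W
  | (t, .fwd u) => if h : 0 < t.val then (⟨t - 1, by omega⟩, .bwd (.inl u)) else (t, .fwd u)
  | (t, .bwd (.inl v)) => if h : t.val + 1 < T then (⟨t + 1, h⟩, .fwd v) else (t, .bwd (.inl v))
  | (t, .bwd (.inr true)) => (t, .bwd (.inr true))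
  | (t, .bwd (.inr false)) => (t, .pad)
  | (t, .pad) => (t, .bwd (.inr false))

theorem layerWire_involutive : Involutive (layerWire (T := T) (W := W)) := by
  rintro ⟨t, n⟩
  rcases n with u | (v | (_ | _)) | _
  · by_cases h : 0 < t.val
    · have h' : t.val - 1 + 1 < T := by omega
      simp only [layerWire, dif_pos h, dif_pos h']
      ext <;> simp; omega
    · simp [layerWire, h]
  · by_cases h : t.val + 1 < T
    · simp [layerWire, h]
    · simp [layerWire, h]
  all_goals rfl

section Composed

variable {Q : Type} {k T W : ℕ}

def innerWalk (a : Fin k → Option Q → Option Q) (b : Fin k → Q → Q) (i : Fin k) : ℕ → Option Q :=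
  walk (a i) (Option.map (b i)) none

@[simp]
theorem innerWalk_zero (a : Fin k → Option Q → Option Q) (b : Fin k → Q → Q) (i : Fin k) :
    innerWalk a b i 0 = none := rfl

variable [DecidableEq Q] (M : PBP k T W)

noncomputable def blockWire (β : Bool) (x : Fin T × Node W) : Fin T × Node W :=
  (x.1, exitWire (M.next x.1 β) β x.2)

theorem blockWire_involutive (β : Bool) : Involutive (blockWire M β) := fun x => by
  simp [blockWire, exitWire_involutive (M.inj x.1 β) β x.2]

theorem blockWire_eq_pad_iff {β : Bool} {x : Fin T × Node W} :
    (blockWire M β x).2 = .pad ↔ x.2 = .pad := by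
  rcases x with ⟨t, _ | z | _⟩ <;> simp only [blockWire, exitWire] <;> split_ifs <;> simp
  cases partialInv (M.next t β) z <;> simp

noncomputable def composedA (a : Fin k → Option Q → Option Q) :
    (Fin T × Node W) × Option Q → (Fin T × Node W) × Option Q :=
  glue (fun x => if x.2 = .pad then id else a (M.var x.1)) fun _ => blockWire M false

noncomputable def composedB (b : Fin k → Q → Q) :
    (Fin T × Node W) × Option Q → (Fin T × Node W) × Option Q :=
  glue (fun x => Option.map (b (M.var x.1))) fun q =>
    if q = none then layerWire else blockWire M true

variable {M} {a : Fin k → Option Q → Option Q} {b : Fin k → Q → Q}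

theorem composedA_involutive (ha : ∀ i, Involutive (a i)) : Involutive (composedA M a) := by
  refine glue_involutive (fun x => ?_) (fun _ => blockWire_involutive M false) fun x q => ?_
  · split_ifs
    exacts [fun _ => rfl, ha _]
  · simp only [blockWire_eq_pad_iff]
    exact id

theorem composedB_involutive (hb : ∀ i, Involutive (b i)) : Involutive (composedB M b) := by
  refine glue_involutive (fun x o => ?_) (fun q => ?_) fun x q hq => ?_
  · exact (hb _).option_map o
  · split_ifs
    exacts [layerWire_involutive, blockWire_involutive M true]
  · by_cases h : q = none
    · simp [h]
    · simp_all [blockWire]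

theorem composedB_start (hT : 0 < T) (u : Fin W) :
    composedB M b ((⟨0, hT⟩, .fwd u), none) = ((⟨0, hT⟩, .fwd u), none) := by
  simp [composedB, glue, layerWire]

theorem composed_step_of_ne {t : Fin T} {n : Node W} (hn : n ≠ .pad) {q : Option Q} {m : ℕ}
    (h : walkStep (a (M.var t)) (Option.map (b (M.var t))) m q ≠ q) :
    walkStep (composedA M a) (composedB M b) m ((t, n), q) =
      ((t, n), walkStep (a (M.var t)) (Option.map (b (M.var t))) m q) := by
  simp only [composedA, composedB, walkStep_glue]
  rw [glue_of_ne] <;> simp [hn, h]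

theorem composed_step_exit {t : Fin T} {n : Node W} (hn : n ≠ .pad) {q : Option Q} {m : ℕ}
    {β : Bool} (hβ : m % 2 = 1 ↔ β = true)
    (h : walkStep (a (M.var t)) (Option.map (b (M.var t))) m q = q) (hq : β = true → q ≠ none) :
    walkStep (composedA M a) (composedB M b) m ((t, n), q) =
      ((t, exitWire (M.next t β) β n), q) := by
  simp only [composedA, composedB, walkStep_glue]
  rw [glue_of_eq (by simpa [hn] using h)]
  cases β
  · simp [walkStep, show m % 2 = 0 by simpa using hβ, blockWire]
  · simp [walkStep, show m % 2 = 1 by simpa using hβ, hq rfl, blockWire]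

theorem composed_step_layer {m : ℕ} (hm : m % 2 = 1) (x : Fin T × Node W) :
    walkStep (composedA M a) (composedB M b) m (x, none) = (layerWire x, none) := by
  simp [composedB, walkStep, hm, glue]

theorem composed_step_pad {m : ℕ} (hm : m % 2 = 0) (t : Fin T) (q : Option Q) :
    walkStep (composedA M a) (composedB M b) m ((t, .pad), q) = ((t, .pad), q) := by
  simp [composedA, walkStep, hm, glue, blockWire, exitWire]

end Composed

section Simulation

variable {Q : Type} [DecidableEq Q] {k T W : ℕ} {M : PBP k T W}
  {a : Fin k → Option Q → Option Q} {b : Fin k → Q → Q} {x₀ : (Fin T × Node W) × Option Q}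

local notation "𝒲" => walk (composedA M a) (composedB M b) x₀

def EntersAt (s : ℕ → (Fin T × Node W) × Option Q) (t : Fin T) (u : Fin W) (σ : ℕ) : Prop :=
  σ % 2 = 0 ∧ Moves s 0 σ ∧ s σ = ((t, .fwd u), none)

def Reached (s : ℕ → (Fin T × Node W) × Option Q) (t : ℕ) : Fin W ⊕ Bool → Prop
  | .inl u => ∀ h : t < T, ∃ σ, EntersAt s ⟨t, h⟩ u σ
  | .inr r => HaltsWith s r

variable (ha : ∀ i, Involutive (a i)) (hb : ∀ i, Involutive (b i))
include ha hb

theorem composed_walk_exit {t : Fin T} {u : Fin W} {N : ℕ}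
    (hN : HaltsAt (innerWalk a b (M.var t)) N) {β : Bool} (hβ : N % 2 = 1 ↔ β = true) {σ : ℕ}
    (hσ : σ % 2 = 0) (hs : 𝒲 σ = ((t, .fwd u), none)) :
    Moves 𝒲 σ N ∧ 𝒲 (σ + N) = ((t, .fwd u), innerWalk a b (M.var t) N) ∧
      𝒲 (σ + N + 1) = ((t, exitWire (M.next t β) β (.fwd u)), innerWalk a b (M.var t) N) := by
  have hmoves : ∀ j < N, innerWalk a b (M.var t) (j + 1) ≠ innerWalk a b (M.var t) j := by
    intro j hj
    have := hN.1 j hj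
    rwa [zero_add] at this
  have hfwd : ∀ j ≤ N, 𝒲 (σ + j) = ((t, .fwd u), innerWalk a b (M.var t) j) :=
    walk_add_eq hs fun j hj => by
      rw [walkStep_congr (show (σ + j) % 2 = j % 2 by omega)]
      exact composed_step_of_ne (q := innerWalk a b (M.var t) j) (by simp) (hmoves j hj)
  refine ⟨moves_of_eq hfwd fun j hj => by simpa using hmoves j hj, hfwd N le_rfl, ?_⟩
  rw [walk_succ, hfwd N le_rfl, walkStep_congr (show (σ + N) % 2 = N % 2 by omega)]
  exact composed_step_exit (by simp) hβ hN.2 fun hβ' =>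
    hN.walk_ne_start (ha _) ((hb _).option_map) (hβ.mpr hβ')

theorem composed_walk_return {t : Fin T} {n : Node W} (hn : n ≠ .pad) {N : ℕ}
    (hN : HaltsAt (innerWalk a b (M.var t)) N) {τ : ℕ} (hτ : τ % 2 = (N + 1) % 2)
    (hs : 𝒲 τ = ((t, n), innerWalk a b (M.var t) N)) :
    Moves 𝒲 τ N ∧ 𝒲 (τ + N) = ((t, n), none) := by
  have hback : ∀ j ≤ N, 𝒲 (τ + j) = ((t, n), innerWalk a b (M.var t) (N - j)) :=
    walk_add_eq hs fun j hj => by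
      obtain ⟨m, rfl⟩ : ∃ m, N = m + j + 1 := ⟨N - j - 1, by omega⟩
      have hstep := walkStep_walk_succ (x₀ := none) (ha (M.var t)) ((hb (M.var t)).option_map) m
      rw [walkStep_congr (show (τ + j) % 2 = m % 2 by omega), show m + j + 1 - j = m + 1 by omega,
        show m + j + 1 - (j + 1) = m by omega, composed_step_of_ne hn]
      · exact congrArg _ hstep
      · rw [innerWalk, hstep]
        have := hN.1 m (by omega)
        rw [zero_add] at this
        exact this.symm
  refine ⟨moves_of_eq hback fun j hj => ?_, by simpa using hback N le_rfl⟩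
  have := hN.1 (N - (j + 1)) (by omega)
  rw [zero_add, show N - (j + 1) + 1 = N - j by omega] at this
  simpa using this.symm

theorem composed_walk_block {t : Fin T} {u : Fin W} {N : ℕ}
    (hN : HaltsAt (innerWalk a b (M.var t)) N) {β : Bool} (hβ : N % 2 = 1 ↔ β = true) {σ : ℕ}
    (hE : EntersAt 𝒲 t u σ) (hz : M.next t β u ≠ .inr β) :
    Moves 𝒲 0 (σ + N + 1 + N) ∧ 𝒲 (σ + N + 1 + N) = ((t, .bwd (M.next t β u)), none) := by
  obtain ⟨hσ, hmσ, hs⟩ := hE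
  obtain ⟨hmN, hsN, hexit⟩ := composed_walk_exit ha hb hN hβ hσ hs
  rw [exitWire, if_neg hz] at hexit
  obtain ⟨hmR, hend⟩ := composed_walk_return ha hb (by simp) hN (by omega) hexit
  refine ⟨((hmσ.append (by rwa [zero_add])).append (moves_one ?_)).append (by rwa [zero_add]),
    hend⟩
  rw [zero_add, hexit, hsN]
  simp

theorem reached_next (bits : Fin k → Bool) (hbits : ∀ i, HaltsWith (innerWalk a b i) (bits i))
    (t : Fin T) (u : Fin W) {σ : ℕ} (hE : EntersAt 𝒲 t u σ) :
    Reached 𝒲 (t + 1) (M.next t (bits (M.var t)) u) := by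
  obtain ⟨N, hN, hβ⟩ := hbits (M.var t)
  have hσ := hE.1
  by_cases hz : M.next t (bits (M.var t)) u = .inr (bits (M.var t))
  · obtain ⟨-, hmσ, hs⟩ := hE
    obtain ⟨hmN, hsN, hexit⟩ := composed_walk_exit ha hb hN hβ hσ hs
    rw [hz]
    refine ⟨σ + N, ⟨hmσ.append (by rwa [zero_add]), ?_⟩, ?_⟩
    · rw [hexit, hsN, exitWire, if_pos hz]
    · rwa [Nat.add_mod, hσ, zero_add, Nat.mod_mod]
  obtain ⟨hm, hend⟩ := composed_walk_block ha hb hN hβ hE hz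
  have hlayer := composed_step_layer (M := M) (a := a) (b := b) (by omega : (σ + N + 1 + N) % 2 = 1)
    (t, .bwd (M.next t (bits (M.var t)) u))
  rw [← hend, ← walk_succ] at hlayer
  generalize M.next t (bits (M.var t)) u = z at hz hend hlayer ⊢
  rcases z with v | _ | _
  · intro h
    refine ⟨_, by omega, hm.append (moves_one ?_), ?_⟩ <;>
      simp [hlayer, hend, layerWire, Fin.ext_iff, h]
  · refine ⟨σ + N + 1 + N + 1, ⟨hm.append (moves_one ?_), ?_⟩, by simp; omega⟩
    · simp [hlayer, hend, layerWire]
    · rw [walk_succ, hlayer, layerWire, composed_step_pad (by omega)]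
  · refine ⟨σ + N + 1 + N, ⟨hm, ?_⟩, by simp; omega⟩
    rw [hlayer, hend, layerWire]

theorem haltsWith_composed (hT : 0 < T) (bits : Fin k → Bool)
    (hbits : ∀ i, HaltsWith (innerWalk a b i) (bits i)) {r : Bool}
    (hr : M.run bits = .inr r) :
    HaltsWith (walk (composedA M a) (composedB M b) ((⟨0, hT⟩, .fwd M.start), none)) r := by
  suffices Reached (walk (composedA M a) (composedB M b) ((⟨0, hT⟩, .fwd M.start), none)) T
      (M.run bits) by rwa [hr] at this
  refine Fin.foldl_induction _ _ _ (fun _ => ⟨0, rfl, fun j hj => absurd hj j.not_lt_zero, rfl⟩)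
    fun t st hst => ?_
  rcases st with u | r
  · obtain ⟨σ, hE⟩ := hst t.isLt
    exact reached_next ha hb bits hbits t u hE
  · exact hst

end Simulation

end GardenHose

open GardenHose

theorem GHProtocol.exists_compose {X Y : Type} {k T W c : ℕ} (M : PBP k T W)
    {g : (Fin k → Bool) → Bool} (hg : M.Computes g) {f : Fin k → X → Y → Bool}
    (P : Fin k → GHProtocol X Y c) (hP : ∀ i, (P i).Computes (f i)) :
    ∃ R : GHProtocol X Y (T * (2 * W + 3) * (c + 1) - 1),
      R.Computes fun x y => g fun i => f i x y := by
  have hT := PBP.pos_of_computes hg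
  have hcard : Fintype.card ((Fin T × Node W) × Option (Fin c)) = T * (2 * W + 3) * (c + 1) := by
    simp [Node.card]
  rw [← hcard]
  exact GHProtocol.exists_of_haltsWith _ (fun x => composedA M fun i => (P i).A x)
    (fun y => composedB M fun i => (P i).B y) (fun x => composedA_involutive fun i => (P i).hA x)
    (fun y => composedB_involutive fun i => (P i).hB y) (fun _ => composedB_start hT M.start) _
    fun x y => haltsWith_composed (fun i => (P i).hA x) (fun i => (P i).hB y) hT (fun i => f i x y)
      (fun i => ((P i).computes_iff _).mp (hP i) x y) (hg _)

/-- If `g` is computed by a (loose) permutation branching program of length `T`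
and width `W`, and `f₁, …, f_k` have garden-hose complexity at most `c`, then
`GH(g(f₁, …, f_k)) = O(T · W · c)`. The inputs of the `fᵢ` may be distributed
arbitrarily between Alice and Bob. -/
theorem GH_compose_permutationBP :
    ∃ C : ℕ, 0 < C ∧
      ∀ (X Y : Type) (k T W c : ℕ) (M : PBP k T W) (g : (Fin k → Bool) → Bool),
        M.Computes g →
        ∀ f : Fin k → X → Y → Bool,
          (∀ i, ∃ P : GHProtocol X Y c, P.Computes (f i)) →
          ∃ s ≤ C * (T * W * c + 1), ∃ P : GHProtocol X Y s,
            P.Computes (fun x y => g (fun i => f i x y)) := by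
  refine ⟨10, by norm_num, fun X Y k T W c M g hg f hf => ?_⟩
  choose P hP using hf
  rcases Nat.eq_zero_or_pos c with rfl | hc
  · have hconst : (fun x y => g fun i => f i x y) = fun _ _ => g fun _ => false := by
      funext x y
      exact congrArg g (funext fun i => (P i).computes_eq_false_of_zero (hP i) x y)
    obtain ⟨R, hR⟩ := GHProtocol.exists_const X Y (g fun _ => false)
    exact ⟨1, by omega, R, hconst ▸ hR⟩
  · obtain ⟨R, hR⟩ := GHProtocol.exists_compose M hg P hP
    refine ⟨_, ?_, R, hR⟩
    have hW : 0 < W := M.start.pos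
    have hblock : (2 * W + 3) * (c + 1) ≤ 10 * (W * c) := by nlinarith
    calc T * (2 * W + 3) * (c + 1) - 1 ≤ T * (10 * (W * c)) :=
          le_trans (Nat.sub_le _ _) (by rw [mul_assoc]; exact Nat.mul_le_mul_left T hblock)
      _ ≤ 10 * (T * W * c + 1) := by nlinarith
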